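/- The set A = {x ∈ ℝ³₊ : x_1+x_2+x_3 ≤ 2·max(x_1,x_2,x_3)} is absorbing for T: for Lebesgue-almost every x ∈ ℝ³₊ there exists an integer k ≥ 0 such that T^k(x) ∈ A. -/

import Mathlib

open MeasureTheory Filter Topology

/-!
In the coordinates `u = (x₂ + x₃ - x₁, x₁ + x₃ - x₂, x₁ + x₂ - x₃)` the complement of `A` in
the octant is the open positive cone, and each of the three branches of `T` acts linearly with
determinant one. Hence the points whose first `n` iterates avoid `A` land in `survivors n`, a
union of `3ⁿ` unimodular preimages of the positive cone. Cutting with a half-space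
`a u₁ + b u₂ + c u₃ ≤ R`, a branch turns the weights `(a, b, c)` into `(a, a + b, a + c)` (or
its analogues), so the volume is at most `R³ · weightSum n a b c`, where `weightSum` adds up
`(a'b'c')⁻¹` over the `3ⁿ` descendant weights. One step multiplies this sum by at most
`1 - m / 4M` (`m`, `M` the smallest and largest weight), while `m / M` decays only slowly along
the tree; this gives `weightSum n a b c ≤ (abc)⁻¹ (M / (M + n m))^(1/4) → 0`.
-/

/-- The subtractive map on the positive octant of `ℝ³`: subtract the minimal
coordinate from the other two. -/
noncomputable def T3 (x : Fin 3 → ℝ) : Fin 3 → ℝ :=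
  if x 0 ≤ x 1 ∧ x 0 ≤ x 2 then ![x 0, x 1 - x 0, x 2 - x 0]
  else if x 1 ≤ x 0 ∧ x 1 ≤ x 2 then ![x 0 - x 1, x 1, x 2 - x 1]
  else ![x 0 - x 2, x 1 - x 2, x 2]

/-- `A = {x ∈ ℝ³₊ : x₁+x₂+x₃ ≤ 2·max(x₁,x₂,x₃)}`. -/
def A3 : Set (Fin 3 → ℝ) :=
  {x | (∀ i, 0 ≤ x i) ∧ x 0 + x 1 + x 2 ≤ 2 * max (x 0) (max (x 1) (x 2))}

namespace FullySubtractive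

noncomputable def weightSum : ℕ → ℝ → ℝ → ℝ → ℝ
  | 0, a, b, c => (a * b * c)⁻¹
  | n + 1, a, b, c =>
      weightSum n a (a + b) (a + c) + weightSum n (a + b) b (b + c) +
        weightSum n (a + c) (b + c) c

theorem weightSum_nonneg :
    ∀ (n : ℕ) {a b c : ℝ}, 0 < a → 0 < b → 0 < c → 0 ≤ weightSum n a b c
  | 0, a, b, c, ha, hb, hc => by rw [weightSum]; positivity
  | n + 1, a, b, c, ha, hb, hc => by
    rw [weightSum]
    have h₁ := weightSum_nonneg n ha (add_pos ha hb) (add_pos ha hc)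
    have h₂ := weightSum_nonneg n (add_pos ha hb) hb (add_pos hb hc)
    have h₃ := weightSum_nonneg n (add_pos ha hc) (add_pos hb hc) hc
    positivity

theorem mul_prod_add_le_of_le {a b c M : ℝ} (ha : 0 < a) (hab : a ≤ b) (hac : a ≤ c)
    (hbM : b ≤ M) (hcM : c ≤ M) :
    a * ((a + b) * (b + c) * (c + a)) ≤ 8 * (a * b * c) * M := by
  have hb : 0 < b := ha.trans_le hab
  have hc : 0 < c := ha.trans_le hac
  have hM : 0 < M := hb.trans_le hbM
  calc a * ((a + b) * (b + c) * (c + a)) ≤ a * ((2 * b) * (2 * M) * (2 * c)) := by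
        gcongr <;> linarith
    _ = 8 * (a * b * c) * M := by ring

theorem min_mul_prod_add_le {a b c m M : ℝ} (ha : 0 < a) (hb : 0 < b) (hc : 0 < c)
    (hma : m ≤ a) (hmb : m ≤ b) (hmc : m ≤ c) (haM : a ≤ M) (hbM : b ≤ M)
    (hcM : c ≤ M) :
    m * ((a + b) * (b + c) * (c + a)) ≤ 8 * (a * b * c) * M := by
  have key : ∃ x, m ≤ x ∧ x * ((a + b) * (b + c) * (c + a)) ≤ 8 * (a * b * c) * M := by
    rcases le_total a b with hab | hba <;> rcases le_total a c with hac | hca <;>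
      rcases le_total b c with hbc | hcb
    all_goals first
      | exact ⟨a, hma, mul_prod_add_le_of_le ha (by linarith) (by linarith) hbM hcM⟩
      | exact ⟨b, hmb, by
          linear_combination mul_prod_add_le_of_le hb (by linarith) (by linarith) haM hcM⟩
      | exact ⟨c, hmc, by
          linear_combination mul_prod_add_le_of_le hc (by linarith) (by linarith) haM hbM⟩
  obtain ⟨x, hmx, hx⟩ := key
  exact (mul_le_mul_of_nonneg_right hmx (by positivity)).trans hx

theorem sum_inv_children_le {a b c m M : ℝ} (hm : 0 < m) (hma : m ≤ a) (hmb : m ≤ b)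
    (hmc : m ≤ c) (haM : a ≤ M) (hbM : b ≤ M) (hcM : c ≤ M) :
    (a * (a + b) * (a + c))⁻¹ + ((a + b) * b * (b + c))⁻¹ + ((a + c) * (b + c) * c)⁻¹ ≤
      (a * b * c)⁻¹ * (1 - m / M / 4) := by
  have ha := hm.trans_le hma
  have hb := hm.trans_le hmb
  have hc := hm.trans_le hmc
  have hM := ha.trans_le haM
  have hsum :
      (a * (a + b) * (a + c))⁻¹ + ((a + b) * b * (b + c))⁻¹ + ((a + c) * (b + c) * c)⁻¹ =
        (a * b * c)⁻¹ * (1 - 2 * (a * b * c) / ((a + b) * (b + c) * (c + a))) := by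
    field_simp
    ring
  rw [hsum]
  refine mul_le_mul_of_nonneg_left (sub_le_sub_left ?_ 1) (by positivity)
  rw [div_div, div_le_div_iff₀ (by positivity) (by positivity)]
  linarith [min_mul_prod_add_le ha hb hc hma hmb hmc haM hbM hcM]

theorem one_sub_div_four_mul_rpow_le_one {t : ℝ} (ht : 0 ≤ t) :
    (1 - t / 4) * (1 + t) ^ (1 / 4 : ℝ) ≤ 1 := by
  rcases le_total (1 - t / 4) 0 with hneg | hpos
  · exact (mul_nonpos_of_nonpos_of_nonneg hneg (by positivity)).trans zero_le_one
  calc (1 - t / 4) * (1 + t) ^ (1 / 4 : ℝ) ≤ (1 - t / 4) * (1 + 1 / 4 * t) := by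
        gcongr
        exact rpow_one_add_le_one_add_mul_self (by linarith) (by norm_num) (by norm_num)
    _ ≤ 1 := by nlinarith

theorem add_div_add_mul_le_of_le {M m a k : ℝ} (hM : 0 < M) (hm : 0 < m) (hk : 1 ≤ k)
    (hma : m ≤ a) : (M + a) / (M + k * a) ≤ (M + m) / (M + k * m) := by
  have ha := hm.trans_le hma
  rw [div_le_div_iff₀ (by positivity) (by positivity)]
  nlinarith [mul_le_mul_of_nonneg_left hma (mul_nonneg (by linarith) hM.le : 0 ≤ (k - 1) * M)]

theorem weightSum_le :
    ∀ (n : ℕ) {a b c m M : ℝ}, 0 < m → m ≤ a → m ≤ b → m ≤ c →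
      a ≤ M → b ≤ M → c ≤ M →
    weightSum n a b c ≤ (a * b * c)⁻¹ * (M / (M + n * m)) ^ (1 / 4 : ℝ)
  | 0, a, b, c, m, M, hm, hma, hmb, hmc, haM, hbM, hcM => by
    have hM : 0 < M := hm.trans_le (hma.trans haM)
    simp [weightSum, hM.ne']
  | n + 1, a, b, c, m, M, hm, hma, hmb, hmc, haM, hbM, hcM => by
    have ha := hm.trans_le hma
    have hb := hm.trans_le hmb
    have hc := hm.trans_le hmc
    have hM := ha.trans_le haM
    set ρ := (M + m) / (M + (n + 1 : ℕ) * m)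
    -- each child has its entries in `[x, x + M]`, where `x ≥ m` is the entry it inherits
    have child : ∀ {x p q r : ℝ}, m ≤ x → x ≤ p → x ≤ q → x ≤ r →
        p ≤ x + M → q ≤ x + M → r ≤ x + M →
          weightSum n p q r ≤ (p * q * r)⁻¹ * ρ ^ (1 / 4 : ℝ) := by
      intro x p q r hmx hxp hxq hxr hpM hqM hrM
      have hx := hm.trans_le hmx
      have hp := hx.trans_le hxp
      have hq := hx.trans_le hxq
      have hr := hx.trans_le hxr
      refine (weightSum_le n hx hxp hxq hxr hpM hqM hrM).trans ?_
      refine mul_le_mul_of_nonneg_left (Real.rpow_le_rpow (by positivity) ?_ (by norm_num))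
        (by positivity)
      calc (x + M) / (x + M + n * x) = (M + x) / (M + (n + 1 : ℕ) * x) := by push_cast; ring
        _ ≤ ρ := add_div_add_mul_le_of_le hM hm (by simp) hmx
    have hρ : ρ = M / (M + (n + 1 : ℕ) * m) * (1 + m / M) := by
      simp only [ρ]; field_simp
    calc weightSum (n + 1) a b c
        ≤ ((a * (a + b) * (a + c))⁻¹ + ((a + b) * b * (b + c))⁻¹ +
            ((a + c) * (b + c) * c)⁻¹) * ρ ^ (1 / 4 : ℝ) := by
          rw [weightSum, add_mul, add_mul]
          gcongr
          · refine child hma ?_ ?_ ?_ ?_ ?_ ?_ <;> linarith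
          · refine child hmb ?_ ?_ ?_ ?_ ?_ ?_ <;> linarith
          · refine child hmc ?_ ?_ ?_ ?_ ?_ ?_ <;> linarith
      _ ≤ (a * b * c)⁻¹ * (1 - m / M / 4) * ρ ^ (1 / 4 : ℝ) := by
          gcongr
          exact sum_inv_children_le hm hma hmb hmc haM hbM hcM
      _ = (a * b * c)⁻¹ * (M / (M + (n + 1 : ℕ) * m)) ^ (1 / 4 : ℝ) *
            ((1 - m / M / 4) * (1 + m / M) ^ (1 / 4 : ℝ)) := by
          rw [hρ, Real.mul_rpow (by positivity) (by positivity)]; ring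
      _ ≤ (a * b * c)⁻¹ * (M / (M + (n + 1 : ℕ) * m)) ^ (1 / 4 : ℝ) :=
          mul_le_of_le_one_right (by positivity) (one_sub_div_four_mul_rpow_le_one (by positivity))

noncomputable def branchMatrix : Fin 3 → Matrix (Fin 3) (Fin 3) ℝ :=
  ![!![1, -1, -1; 0, 1, 0; 0, 0, 1], !![1, 0, 0; -1, 1, -1; 0, 0, 1],
    !![1, 0, 0; 0, 1, 0; -1, -1, 1]]

-- the action of `T` in `defectMap`-coordinates where `x j` is the minimal coordinate
noncomputable def branchMap (j : Fin 3) : (Fin 3 → ℝ) →ₗ[ℝ] Fin 3 → ℝ :=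
  Matrix.toLin' (branchMatrix j)

theorem branchMap_zero_apply (u : Fin 3 → ℝ) :
    branchMap 0 u = ![u 0 - u 1 - u 2, u 1, u 2] := by
  ext i
  fin_cases i <;> simp [branchMap, branchMatrix, Matrix.mulVec, dotProduct, Fin.sum_univ_three]
  ring

theorem branchMap_one_apply (u : Fin 3 → ℝ) :
    branchMap 1 u = ![u 0, u 1 - u 0 - u 2, u 2] := by
  ext i
  fin_cases i <;> simp [branchMap, branchMatrix, Matrix.mulVec, dotProduct, Fin.sum_univ_three]
  ring

theorem branchMap_two_apply (u : Fin 3 → ℝ) :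
    branchMap 2 u = ![u 0, u 1, u 2 - u 0 - u 1] := by
  ext i
  fin_cases i <;> simp [branchMap, branchMatrix, Matrix.mulVec, dotProduct, Fin.sum_univ_three]
  ring

noncomputable def defectMap : (Fin 3 → ℝ) →ₗ[ℝ] Fin 3 → ℝ :=
  Matrix.toLin' !![-1, 1, 1; 1, -1, 1; 1, 1, -1]

theorem defectMap_apply (x : Fin 3 → ℝ) :
    defectMap x = ![x 1 + x 2 - x 0, x 0 + x 2 - x 1, x 0 + x 1 - x 2] := by
  ext i
  fin_cases i <;> simp [defectMap, Matrix.mulVec, dotProduct, Fin.sum_univ_three] <;> ring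

theorem det_branchMap (j : Fin 3) : LinearMap.det (branchMap j) = 1 := by
  rw [branchMap, LinearMap.det_toLin']
  fin_cases j <;> simp [branchMatrix, Matrix.det_fin_three]

theorem det_defectMap : LinearMap.det defectMap = 4 := by
  rw [defectMap, LinearMap.det_toLin']
  simp [Matrix.det_fin_three]
  norm_num

theorem volume_preimage_branchMap (j : Fin 3) (s : Set (Fin 3 → ℝ)) :
    volume (branchMap j ⁻¹' s) = volume s := by
  simp [Measure.addHaar_preimage_linearMap, det_branchMap]

theorem volume_preimage_branchMap_inter {j : Fin 3} {s t t' : Set (Fin 3 → ℝ)}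
    (ht : branchMap j ⁻¹' t' = t) : volume (branchMap j ⁻¹' s ∩ t) = volume (s ∩ t') := by
  rw [← ht, ← Set.preimage_inter, volume_preimage_branchMap]

def survivors : ℕ → Set (Fin 3 → ℝ)
  | 0 => {u | ∀ i, 0 < u i}
  | n + 1 => ⋃ j, branchMap j ⁻¹' survivors n

def halfSpace (a b c R : ℝ) : Set (Fin 3 → ℝ) := {u | a * u 0 + b * u 1 + c * u 2 ≤ R}

theorem branchMap_zero_preimage_halfSpace (a b c R : ℝ) :
    branchMap 0 ⁻¹' halfSpace a (a + b) (a + c) R = halfSpace a b c R := by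
  ext u; simp [halfSpace, branchMap_zero_apply]; ring_nf

theorem branchMap_one_preimage_halfSpace (a b c R : ℝ) :
    branchMap 1 ⁻¹' halfSpace (a + b) b (b + c) R = halfSpace a b c R := by
  ext u; simp [halfSpace, branchMap_one_apply]; ring_nf

theorem branchMap_two_preimage_halfSpace (a b c R : ℝ) :
    branchMap 2 ⁻¹' halfSpace (a + c) (b + c) c R = halfSpace a b c R := by
  ext u; simp [halfSpace, branchMap_two_apply]; ring_nf

theorem survivors_zero_inter_halfSpace_subset {a b c R : ℝ} (ha : 0 < a) (hb : 0 < b)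
    (hc : 0 < c) : survivors 0 ∩ halfSpace a b c R ⊆ Set.Icc 0 ![R / a, R / b, R / c] := by
  rintro u ⟨hu, hR : a * u 0 + b * u 1 + c * u 2 ≤ R⟩
  have h₀ := hu 0; have h₁ := hu 1; have h₂ := hu 2
  refine ⟨fun i ↦ (hu i).le, fun i ↦ ?_⟩
  fin_cases i <;> simp only [Fin.zero_eta, Fin.mk_one, Fin.reduceFinMk, Matrix.cons_val] <;>
    rw [le_div_iff₀ ‹_›] <;> nlinarith

theorem volume_survivors_inter_halfSpace_le :
    ∀ (n : ℕ) {a b c R : ℝ}, 0 < a → 0 < b → 0 < c → 0 ≤ R →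
      volume (survivors n ∩ halfSpace a b c R) ≤ ENNReal.ofReal (R ^ 3 * weightSum n a b c)
  | 0, a, b, c, R, ha, hb, hc, hR => by
    refine (measure_mono (survivors_zero_inter_halfSpace_subset ha hb hc)).trans_eq ?_
    rw [Real.volume_Icc_pi, Fin.prod_univ_three, ← ENNReal.ofReal_mul (by simp; positivity),
      ← ENNReal.ofReal_mul (by simp; positivity), weightSum]
    congr 1
    simp
    field_simp
  | n + 1, a, b, c, R, ha, hb, hc, hR => by
    have hab := add_pos ha hb
    have hac := add_pos ha hc
    have hbc := add_pos hb hc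
    have hS := fun {a b c : ℝ} (ha : 0 < a) (hb : 0 < b) (hc : 0 < c) ↦
      volume_survivors_inter_halfSpace_le n ha hb hc hR
    have hW := fun {a b c : ℝ} (ha : 0 < a) (hb : 0 < b) (hc : 0 < c) ↦
      mul_nonneg (pow_nonneg hR 3) (weightSum_nonneg n ha hb hc)
    calc volume (survivors (n + 1) ∩ halfSpace a b c R)
        ≤ ∑ j, volume (branchMap j ⁻¹' survivors n ∩ halfSpace a b c R) := by
          rw [survivors, Set.iUnion_inter]
          exact measure_iUnion_fintype_le _ _
      _ = volume (survivors n ∩ halfSpace a (a + b) (a + c) R) +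
            volume (survivors n ∩ halfSpace (a + b) b (b + c) R) +
            volume (survivors n ∩ halfSpace (a + c) (b + c) c R) := by
          rw [Fin.sum_univ_three,
            volume_preimage_branchMap_inter (branchMap_zero_preimage_halfSpace a b c R),
            volume_preimage_branchMap_inter (branchMap_one_preimage_halfSpace a b c R),
            volume_preimage_branchMap_inter (branchMap_two_preimage_halfSpace a b c R)]
      _ ≤ ENNReal.ofReal (R ^ 3 * weightSum n a (a + b) (a + c)) +
            ENNReal.ofReal (R ^ 3 * weightSum n (a + b) b (b + c)) +
            ENNReal.ofReal (R ^ 3 * weightSum n (a + c) (b + c) c) := by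
          gcongr <;> apply hS <;> positivity
      _ = ENNReal.ofReal (R ^ 3 * weightSum (n + 1) a b c) := by
          rw [weightSum, mul_add, mul_add, ENNReal.ofReal_add (add_nonneg (hW ha hab hac)
            (hW hab hb hbc)) (hW hac hbc hc), ENNReal.ofReal_add (hW ha hab hac) (hW hab hb hbc)]

theorem tendsto_weightSum_one_one_one : Tendsto (fun n ↦ weightSum n 1 1 1) atTop (𝓝 0) := by
  have hbound : Tendsto (fun n : ℕ ↦ (1 / ((n : ℝ) + 1)) ^ (1 / 4 : ℝ)) atTop (𝓝 0) := by
    simpa [Real.zero_rpow] using tendsto_one_div_add_atTop_nhds_zero_nat.rpow_const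
      (Or.inr (by norm_num : (0 : ℝ) ≤ 1 / 4))
  refine squeeze_zero (fun n ↦ weightSum_nonneg n one_pos one_pos one_pos) (fun n ↦ ?_) hbound
  simpa [add_comm] using weightSum_le n one_pos le_rfl le_rfl le_rfl le_rfl le_rfl le_rfl

theorem volume_iInter_survivors : volume (⋂ n, survivors n) = 0 := by
  have hcover : ⋂ n, survivors n ⊆ ⋃ R : ℕ, ⋂ n, survivors n ∩ halfSpace 1 1 1 R := by
    intro u hu
    obtain ⟨R, hR⟩ := exists_nat_ge (u 0 + u 1 + u 2)
    exact Set.mem_iUnion.2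
      ⟨R, Set.mem_iInter.2 fun n ↦ ⟨Set.mem_iInter.1 hu n, by simpa [halfSpace]⟩⟩
  refine measure_mono_null hcover (measure_iUnion_null fun R ↦ ?_)
  have hlim := ENNReal.tendsto_ofReal (tendsto_weightSum_one_one_one.const_mul ((R : ℝ) ^ 3))
  rw [mul_zero, ENNReal.ofReal_zero] at hlim
  refine le_antisymm (ge_of_tendsto' hlim fun n ↦ ?_) bot_le
  exact (measure_mono (Set.iInter_subset _ n)).trans
    (volume_survivors_inter_halfSpace_le n one_pos one_pos one_pos R.cast_nonneg)

theorem T3_nonneg {x : Fin 3 → ℝ} (hx : ∀ i, 0 ≤ x i) (i : Fin 3) : 0 ≤ T3 x i := by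
  have h₀ := hx 0; have h₁ := hx 1; have h₂ := hx 2
  unfold T3
  split_ifs <;> fin_cases i <;> simp <;> grind

theorem defectMap_pos {x : Fin 3 → ℝ} (hx : ∀ i, 0 ≤ x i) (hA : x ∉ A3) (i : Fin 3) :
    0 < defectMap x i := by
  have hlt : 2 * max (x 0) (max (x 1) (x 2)) < x 0 + x 1 + x 2 := not_le.1 fun h ↦ hA ⟨hx, h⟩
  rw [defectMap_apply]
  fin_cases i <;> simp <;> grind

theorem exists_branchMap_defectMap (x : Fin 3 → ℝ) :
    ∃ j, branchMap j (defectMap x) = defectMap (T3 x) := by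
  unfold T3
  split_ifs
  · exact ⟨0, by ext i; fin_cases i <;> simp [branchMap_zero_apply, defectMap_apply] <;> ring⟩
  · exact ⟨1, by ext i; fin_cases i <;> simp [branchMap_one_apply, defectMap_apply] <;> ring⟩
  · exact ⟨2, by ext i; fin_cases i <;> simp [branchMap_two_apply, defectMap_apply] <;> ring⟩

theorem defectMap_mem_survivors : ∀ (n : ℕ) {x : Fin 3 → ℝ}, (∀ i, 0 ≤ x i) →
    (∀ k ≤ n, T3^[k] x ∉ A3) → defectMap x ∈ survivors n
  | 0, x, hx, hA => defectMap_pos hx (hA 0 le_rfl)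
  | n + 1, x, hx, hA => by
    obtain ⟨j, hj⟩ := exists_branchMap_defectMap x
    refine Set.mem_iUnion.2 ⟨j, ?_⟩
    rw [Set.mem_preimage, hj]
    exact defectMap_mem_survivors n (T3_nonneg hx) fun k hk ↦ hA (k + 1) (by omega)

theorem defectMap_mem_iInter_survivors {x : Fin 3 → ℝ} (hx : ∀ i, 0 ≤ x i)
    (hA : ∀ k, T3^[k] x ∉ A3) : defectMap x ∈ ⋂ n, survivors n :=
  Set.mem_iInter.2 fun n ↦ defectMap_mem_survivors n hx fun k _ ↦ hA k

theorem volume_preimage_defectMap_iInter_survivors :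
    volume (defectMap ⁻¹' ⋂ n, survivors n) = 0 := by
  rw [Measure.addHaar_preimage_linearMap _ (by simp [det_defectMap]), volume_iInter_survivors,
    mul_zero]

end FullySubtractive

/-- `A` is absorbing for `T`: for a.e. `x ∈ ℝ³₊` some iterate of
`T` sends `x` into `A`. -/
theorem statement6 :
    ∀ᵐ x : Fin 3 → ℝ, (∀ i, 0 ≤ x i) → ∃ k : ℕ, T3^[k] x ∈ A3 := by
  rw [ae_iff]
  refine measure_mono_null (fun x hx ↦ ?_)
    FullySubtractive.volume_preimage_defectMap_iInter_survivors
  obtain ⟨hx₀, hA⟩ := Classical.not_imp.1 hx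
  exact FullySubtractive.defectMap_mem_iInter_survivors hx₀ (not_exists.1 hA)
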